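/- Let α ∈ ℝ and let β : ℤ → [0,1) be an arbitrary function. Set Λ = { (α + m, β(m) + n) : m, n ∈ ℤ } ⊂ ℝ². Then ([0,1]², Λ) is a spectral pair; that is, the family { e_λ|_{[0,1]²} : λ ∈ Λ } is an orthogonal basis of L²([0,1]²). -/

import Mathlib

open MeasureTheory
open Complex Set ENNReal NNReal

/-- The exponential `e_λ(x) = e^{2πi λ·x}` on `ℝ²`. -/
noncomputable def expFn2 (l : ℝ × ℝ) : ℝ × ℝ → ℂ :=
  fun x => Complex.exp (2 * Real.pi * Complex.I * (l.1 * x.1 + l.2 * x.2))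

/-- The closed unit square `[0,1]²`. -/
def unitSquare : Set (ℝ × ℝ) := Set.Icc (0 : ℝ) 1 ×ˢ Set.Icc (0 : ℝ) 1

open Classical in
/-- The element of `L²(Ω)` determined by a function `f : ℝ² → ℂ`
(junk value `0` if `f` is not square-integrable on `Ω`). -/
noncomputable def toL2 (Ω : Set (ℝ × ℝ)) (f : ℝ × ℝ → ℂ) : Lp ℂ 2 (volume.restrict Ω) :=
  if h : MemLp f 2 (volume.restrict Ω) then h.toLp f else 0

/-- `(Ω, Λ)` is a spectral pair: the restrictions `e_λ|_Ω`, `λ ∈ Λ`, are pairwise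
orthogonal nonzero elements of `L²(Ω)` whose linear span is dense in `L²(Ω)`. -/
def IsSpectralPair (Ω : Set (ℝ × ℝ)) (Λ : Set (ℝ × ℝ)) : Prop :=
  (∀ l ∈ Λ, toL2 Ω (expFn2 l) ≠ 0) ∧
  (∀ l ∈ Λ, ∀ m ∈ Λ, l ≠ m → (inner ℂ (toL2 Ω (expFn2 l)) (toL2 Ω (expFn2 m)) : ℂ) = 0) ∧
  Dense (↑(Submodule.span ℂ ((fun l => toL2 Ω (expFn2 l)) '' Λ)) :
    Set (Lp ℂ 2 (volume.restrict Ω)))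

noncomputable def eK (a : ℝ) : ℝ → ℂ := fun t => Complex.exp (2 * Real.pi * Complex.I * (a * t))

lemma eK_norm (a t : ℝ) : ‖eK a t‖ = 1 := by
  have h : (2 * (Real.pi:ℂ) * Complex.I * ((a:ℂ) * t)) = ((2 * Real.pi * (a * t) : ℝ) : ℂ) * Complex.I := by
    push_cast; ring
  rw [eK, h, Complex.norm_exp_ofReal_mul_I]

lemma eK_cont (a : ℝ) : Continuous (eK a) := by
  unfold eK; fun_prop

lemma eK_memℒp (a : ℝ) (p : ENNReal) (s : Set ℝ) (hs : volume s < ⊤) :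
    MemLp (eK a) p (volume.restrict s) := by
  have : IsFiniteMeasure (volume.restrict s) :=
    ⟨by rw [Measure.restrict_apply_univ]; exact hs⟩
  exact MemLp.of_bound ((eK_cont a).aestronglyMeasurable) 1
    (Filter.Eventually.of_forall fun x => le_of_eq (eK_norm a x))

lemma eK_int_zero (k : ℤ) (hk : k ≠ 0) :
    ∫ x in Set.Ioc (0:ℝ) 1, eK (k:ℝ) x = 0 := by
  rw [← intervalIntegral.integral_of_le (by norm_num : (0:ℝ) ≤ 1)]
  have hc : (2 * (Real.pi:ℂ) * Complex.I * (k:ℂ)) ≠ 0 := by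
    simp [Real.pi_ne_zero, Complex.I_ne_zero, hk]
  have : ∀ x : ℝ, eK (k:ℝ) x = Complex.exp ((2 * (Real.pi:ℂ) * Complex.I * (k:ℂ)) * (x:ℝ)) := by
    intro x; rw [eK]; congr 1; push_cast; ring
  rw [intervalIntegral.integral_congr (g := fun x => Complex.exp ((2 * (Real.pi:ℂ) * Complex.I * (k:ℂ)) * (x:ℝ))) (fun x _ => this x)]
  rw [integral_exp_mul_complex hc]
  have h1 : Complex.exp (2 * (Real.pi:ℂ) * Complex.I * (k:ℂ) * (1:ℝ)) = 1 := by
    push_cast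
    rw [mul_one]
    have := Complex.exp_int_mul_two_pi_mul_I k
    rw [← this]; congr 1; ring
  have h0 : Complex.exp (2 * (Real.pi:ℂ) * Complex.I * (k:ℂ) * (0:ℝ)) = 1 := by
    norm_num
  rw [h1, h0]; simp

lemma eK_mul (a b : ℝ) (t : ℝ) : eK a t * eK b t = eK (a + b) t := by
  rw [eK, eK, eK, ← Complex.exp_add]; congr 1; push_cast; ring

lemma eK_ne_zero (a t : ℝ) : eK a t ≠ 0 := Complex.exp_ne_zero _


instance fact_zero_lt_one_real : Fact ((0:ℝ) < 1) := ⟨one_pos⟩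

lemma key1D (f : ℝ → ℂ) (hf : MemLp f 2 (volume.restrict (Ioc (0:ℝ) 1))) (γ : ℝ)
    (h : ∀ m : ℤ, ∫ x in Ioc (0:ℝ) 1, f x * eK (γ + m) x = 0) :
    f =ᵐ[volume.restrict (Ioc (0:ℝ) 1)] 0 := by
  set μ := volume.restrict (Ioc (0:ℝ) 1) with hμ
  set g : ℝ → ℂ := fun x => f x * eK γ x with hgdef
  have hgm : AEStronglyMeasurable g μ := hf.1.mul (eK_cont γ).aestronglyMeasurable
  have hg : MemLp g 2 μ := by
    refine MemLp.of_le hf hgm ?_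
    refine Filter.Eventually.of_forall fun x => ?_
    simp only [hgdef, norm_mul, eK_norm, mul_one]; exact le_rfl
  set g' : ℝ → ℂ := hgm.mk g with hg'def
  have hg'sm : StronglyMeasurable g' := hgm.stronglyMeasurable_mk
  have heq : g =ᵐ[μ] g' := hgm.ae_eq_mk
  have hg'2 : MemLp g' 2 μ := hg.ae_eq heq
  -- the circle
  have hhaar : (AddCircle.haarAddCircle : Measure (AddCircle (1:ℝ))) = volume := by
    rw [AddCircle.volume_eq_smul_haarAddCircle]; simp
  have mp : MeasurePreserving (fun x : ℝ => (x : AddCircle (1:ℝ))) μ AddCircle.haarAddCircle := by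
    have := AddCircle.measurePreserving_mk (1:ℝ) 0
    rw [zero_add] at this
    rw [hhaar]
    exact this
  set G : AddCircle (1:ℝ) → ℂ := AddCircle.liftIoc (1:ℝ) 0 g' with hGdef
  have hGsm : StronglyMeasurable G := by
    have : Measurable G := by
      have h1 : Measurable (AddCircle.measurableEquivIoc (1:ℝ) 0) := (AddCircle.measurableEquivIoc (1:ℝ) 0).measurable
      exact hg'sm.measurable.comp (measurable_subtype_coe.comp h1)
    exact this.stronglyMeasurable
  have hGae : (fun x => G ((x : ℝ) : AddCircle (1:ℝ))) =ᵐ[μ] g' := by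
    filter_upwards [ae_restrict_mem measurableSet_Ioc] with x hx
    exact AddCircle.liftIoc_coe_apply (by simpa using hx)
  have hG2 : MemLp G 2 AddCircle.haarAddCircle := by
    rw [← mp.map_eq]
    rw [memLp_map_measure_iff hGsm.aestronglyMeasurable mp.measurable.aemeasurable]
    exact hg'2.ae_eq hGae.symm
  have hco : ∀ n : ℤ, fourierCoeff G n = 0 := by
    intro n
    have hmeas : AEStronglyMeasurable (fun t : AddCircle (1:ℝ) => fourier (-n) t * G t)
        (Measure.map (fun x : ℝ => (x : AddCircle (1:ℝ))) μ) := by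
      rw [mp.map_eq]
      exact ((map_continuous (fourier (-n))).aestronglyMeasurable).mul hGsm.aestronglyMeasurable
    have hint : fourierCoeff G n
        = ∫ x, fourier (-n) ((x : ℝ) : AddCircle (1:ℝ)) * G ((x:ℝ) : AddCircle (1:ℝ)) ∂μ := by
      rw [fourierCoeff]
      simp_rw [smul_eq_mul]
      rw [← mp.map_eq, integral_map mp.measurable.aemeasurable hmeas]
    rw [hint]
    have hcong : ∫ x, fourier (-n) ((x : ℝ) : AddCircle (1:ℝ)) * G ((x:ℝ) : AddCircle (1:ℝ)) ∂μ
        = ∫ x, f x * eK (γ + ((-n : ℤ) : ℝ)) x ∂μ := by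
      apply integral_congr_ae
      filter_upwards [ae_restrict_mem measurableSet_Ioc, heq] with x hx hgx
      have h1 : G ((x:ℝ) : AddCircle (1:ℝ)) = g' x := AddCircle.liftIoc_coe_apply (by simpa using hx)
      have h2 : fourier (-n) ((x : ℝ) : AddCircle (1:ℝ)) = eK (-(n:ℝ)) x := by
        rw [fourier_coe_apply, eK]; congr 1; push_cast; ring
      rw [h1, ← hgx, h2, hgdef]
      show eK (-(n:ℝ)) x * (f x * eK γ x) = f x * eK (γ + ((-n : ℤ) : ℝ)) x
      rw [mul_comm, mul_assoc, eK_mul]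
      congr 2
      push_cast; ring
    rw [hcong, h (-n)]
  -- conclude G = 0 a.e.
  set Fq := hG2.toLp G with hFq
  have hrepr : ∀ i : ℤ, fourierBasis.repr Fq i = 0 := by
    intro i
    rw [fourierBasis_repr]
    have : fourierCoeff (⇑Fq) i = fourierCoeff G i := by
      apply integral_congr_ae
      filter_upwards [hG2.coeFn_toLp] with t ht
      rw [ht]
    rw [this, hco]
  have hFq0 : Fq = 0 := by
    have : fourierBasis.repr Fq = 0 := by
      apply lp.ext
      funext i
      simpa using hrepr i
    simpa using (LinearIsometryEquiv.map_eq_zero_iff fourierBasis.repr).1 this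
  have hG0 : G =ᵐ[AddCircle.haarAddCircle] 0 := by
    have h1 : ⇑Fq =ᵐ[AddCircle.haarAddCircle] G := hG2.coeFn_toLp
    have h2 : ⇑Fq =ᵐ[AddCircle.haarAddCircle] 0 := by rw [hFq0]; exact Lp.coeFn_zero _ _ _
    exact h1.symm.trans h2
  have hcomp0 : (fun x : ℝ => G ((x:ℝ) : AddCircle (1:ℝ))) =ᵐ[μ] 0 := by
    rw [← mp.map_eq] at hG0
    exact ae_of_ae_map mp.measurable.aemeasurable hG0
  have hg'0 : g' =ᵐ[μ] 0 := hGae.symm.trans hcomp0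
  have hg0 : g =ᵐ[μ] 0 := heq.trans hg'0
  filter_upwards [hg0] with x hx
  have : f x * eK γ x = 0 := hx
  rcases mul_eq_zero.1 this with h' | h'
  · exact h'
  · exact absurd h' (eK_ne_zero γ x)

lemma eK_conj (a t : ℝ) : (starRingEnd ℂ) (eK a t) = eK (-a) t := by
  rw [eK, eK, ← Complex.exp_conj]
  congr 1
  simp only [map_mul, Complex.conj_I, Complex.conj_ofReal, map_ofNat]
  push_cast; ring

lemma expFn2_eq (l : ℝ × ℝ) (z : ℝ × ℝ) : expFn2 l z = eK l.1 z.1 * eK l.2 z.2 := by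
  rw [expFn2, eK, eK, ← Complex.exp_add]; congr 1; push_cast; ring

lemma unitSquare_ae_eq :
    volume.restrict unitSquare
      = (volume.restrict (Ioc (0:ℝ) 1)).prod (volume.restrict (Ioc (0:ℝ) 1)) := by
  rw [Measure.prod_restrict, ← MeasureTheory.Measure.volume_eq_prod]
  apply Measure.restrict_congr_set
  rw [ae_eq_set]
  constructor
  · refine measure_mono_null (t := ({(0:ℝ)} ×ˢ (univ : Set ℝ)) ∪ ((univ : Set ℝ) ×ˢ {(0:ℝ)})) ?_ ?_
    · rintro ⟨x, y⟩ ⟨⟨⟨hx0, hx1⟩, hy0, hy1⟩, hne⟩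
      simp only [mem_prod, mem_Ioc, not_and_or, not_and, not_le, not_lt] at hne
      simp only [mem_union, mem_prod, mem_singleton_iff, mem_univ, and_true, true_and]
      rcases hne with (h | h) | (h | h)
      · left; exact le_antisymm h hx0
      · exact absurd h (not_lt.2 hx1)
      · right; exact le_antisymm h hy0
      · exact absurd h (not_lt.2 hy1)
    · apply measure_union_null
      · rw [MeasureTheory.Measure.volume_eq_prod, Measure.prod_prod]; simp
      · rw [MeasureTheory.Measure.volume_eq_prod, Measure.prod_prod]; simp
  · refine measure_mono_null (t := (∅ : Set (ℝ × ℝ))) ?_ ?_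
    · rintro ⟨x, y⟩ ⟨⟨⟨hx0, hx1⟩, hy0, hy1⟩, hne⟩
      exact absurd ⟨⟨hx0.le, hx1⟩, hy0.le, hy1⟩ hne
    · exact measure_empty

lemma unitSquare_volume : volume unitSquare = 1 := by
  rw [unitSquare, MeasureTheory.Measure.volume_eq_prod, Measure.prod_prod]
  simp

instance : IsFiniteMeasure (volume.restrict unitSquare) :=
  ⟨by rw [Measure.restrict_apply_univ, unitSquare_volume]; exact ENNReal.one_lt_top⟩

lemma expFn2_cont (l : ℝ × ℝ) : Continuous (expFn2 l) := by
  unfold expFn2; fun_prop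

lemma expFn2_memℒp (l : ℝ × ℝ) : MemLp (expFn2 l) 2 (volume.restrict unitSquare) := by
  refine MemLp.of_bound (expFn2_cont l).aestronglyMeasurable 1
    (Filter.Eventually.of_forall fun z => ?_)
  rw [expFn2_eq, norm_mul, eK_norm, eK_norm, mul_one]

lemma toL2_ne_zero (l : ℝ × ℝ) : toL2 unitSquare (expFn2 l) ≠ 0 := by
  rw [toL2, dif_pos (expFn2_memℒp l)]
  intro h0
  have h1 := (expFn2_memℒp l).coeFn_toLp
  rw [h0] at h1
  have h2 : expFn2 l =ᵐ[volume.restrict unitSquare] 0 :=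
    h1.symm.trans (Lp.coeFn_zero _ _ _)
  rw [Filter.EventuallyEq, ae_iff] at h2
  have h3 : {z : ℝ × ℝ | ¬ expFn2 l z = (0 : ℝ × ℝ → ℂ) z} = univ := by
    apply eq_univ_of_forall
    intro z
    simp only [mem_setOf_eq, Pi.zero_apply]
    exact Complex.exp_ne_zero _
  rw [h3, Measure.restrict_apply_univ, unitSquare_volume] at h2
  exact one_ne_zero h2

lemma inner_exp (l l' : ℝ × ℝ) :
    (inner ℂ (toL2 unitSquare (expFn2 l)) (toL2 unitSquare (expFn2 l')) : ℂ)
      = (∫ x in Ioc (0:ℝ) 1, eK (-l.1 + l'.1) x) * (∫ y in Ioc (0:ℝ) 1, eK (-l.2 + l'.2) y) := by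
  rw [toL2, dif_pos (expFn2_memℒp l), toL2, dif_pos (expFn2_memℒp l')]
  rw [MeasureTheory.L2.inner_def]
  have hcong : ∫ z, (inner ℂ (((expFn2_memℒp l).toLp (expFn2 l)) z)
        (((expFn2_memℒp l').toLp (expFn2 l')) z) : ℂ) ∂(volume.restrict unitSquare)
      = ∫ z, eK (-l.1 + l'.1) z.1 * eK (-l.2 + l'.2) z.2 ∂(volume.restrict unitSquare) := by
    apply integral_congr_ae
    filter_upwards [(expFn2_memℒp l).coeFn_toLp, (expFn2_memℒp l').coeFn_toLp] with z h1 h2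
    rw [h1, h2, RCLike.inner_apply, expFn2_eq, expFn2_eq, map_mul, eK_conj, eK_conj]
    rw [← eK_mul, ← eK_mul]
    ring
  rw [hcong, unitSquare_ae_eq, integral_prod_mul]


lemma eK_nnnorm (a t : ℝ) : ‖eK a t‖₊ = 1 :=
  NNReal.coe_injective (by rw [coe_nnnorm, eK_norm, NNReal.coe_one])

instance mu1_prob : IsProbabilityMeasure (volume.restrict (Ioc (0:ℝ) 1)) :=
  ⟨by rw [Measure.restrict_apply_univ]; simp [Real.volume_Ioc]⟩

lemma lintegral_sq_le {ν : Measure ℝ} [IsProbabilityMeasure ν] (h : ℝ → ℝ≥0∞)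
    (hm : AEMeasurable h ν) :
    (∫⁻ x, h x ∂ν) ^ (2:ℝ) ≤ ∫⁻ x, (h x) ^ (2:ℝ) ∂ν := by
  have hpq : Real.HolderConjugate 2 2 := Real.HolderConjugate.two_two
  have := ENNReal.lintegral_mul_le_Lp_mul_Lq ν hpq hm (aemeasurable_const (b := (1:ℝ≥0∞)))
  simp only [Pi.mul_apply, mul_one, ENNReal.one_rpow, lintegral_one, measure_univ,
    ENNReal.one_rpow, mul_one] at this
  calc (∫⁻ x, h x ∂ν) ^ (2:ℝ)
      ≤ ((∫⁻ x, h x ^ (2:ℝ) ∂ν) ^ (1/(2:ℝ))) ^ (2:ℝ) := by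
        exact ENNReal.rpow_le_rpow (by simpa using this) (by norm_num)
    _ = ∫⁻ x, h x ^ (2:ℝ) ∂ν := by
        rw [← ENNReal.rpow_mul]; norm_num

lemma density_aux (f : ℝ × ℝ → ℂ) (hfsm : StronglyMeasurable f)
    (hf2 : MemLp f 2 ((volume.restrict (Ioc (0:ℝ) 1)).prod (volume.restrict (Ioc (0:ℝ) 1))))
    (α : ℝ) (β : ℤ → ℝ)
    (hI : ∀ m n : ℤ, ∫ z, eK (-(α+m)) z.1 * eK (-(β m + n)) z.2 * f z
      ∂((volume.restrict (Ioc (0:ℝ) 1)).prod (volume.restrict (Ioc (0:ℝ) 1))) = 0) :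
    f =ᵐ[(volume.restrict (Ioc (0:ℝ) 1)).prod (volume.restrict (Ioc (0:ℝ) 1))] 0 := by
  set μ1 : Measure ℝ := volume.restrict (Ioc (0:ℝ) 1) with hμ1
  set P : Measure (ℝ × ℝ) := μ1.prod μ1 with hP
  have hfint : Integrable f P := hf2.integrable one_le_two
  have hnn : Measurable fun z : ℝ × ℝ => (‖f z‖₊ : ℝ≥0∞) ^ (2:ℝ) :=
    hfsm.measurable.enorm.pow_const _
  have hfin : ∫⁻ z, (‖f z‖₊ : ℝ≥0∞) ^ (2:ℝ) ∂P < ⊤ := by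
    have h2 := hf2.2
    rw [eLpNorm_lt_top_iff_lintegral_rpow_enorm_lt_top (by norm_num) (by norm_num)] at h2
    simpa [enorm_eq_nnnorm] using h2
  have hswap : ∫⁻ y, ∫⁻ x, (‖f (x,y)‖₊ : ℝ≥0∞) ^ (2:ℝ) ∂μ1 ∂μ1
      = ∫⁻ z, (‖f z‖₊ : ℝ≥0∞) ^ (2:ℝ) ∂P := (lintegral_prod_symm _ hnn.aemeasurable).symm
  have hBmeas : Measurable fun y => ∫⁻ x, (‖f (x,y)‖₊ : ℝ≥0∞) ^ (2:ℝ) ∂μ1 :=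
    Measurable.lintegral_prod_left' hnn
  have hsec : ∀ᵐ y ∂μ1, ∫⁻ x, (‖f (x,y)‖₊ : ℝ≥0∞) ^ (2:ℝ) ∂μ1 < ⊤ := by
    apply ae_lt_top hBmeas
    rw [hswap]; exact hfin.ne
  -- the partial transforms
  set g : ℤ → ℝ → ℂ := fun m y => ∫ x, eK (-(α+m)) x * f (x,y) ∂μ1 with hg
  have hgsm : ∀ m, StronglyMeasurable (g m) := by
    intro m
    apply MeasureTheory.StronglyMeasurable.integral_prod_left
      (f := fun x y => eK (-(α+m)) x * f (x,y))
    exact ((((eK_cont (-(α+m))).comp continuous_fst).measurable).mul hfsm.measurable).stronglyMeasurable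
  have hsecm : ∀ y : ℝ, Measurable fun x => f (x, y) := fun y =>
    hfsm.measurable.comp (measurable_id.prodMk measurable_const)
  have hgbd : ∀ m y, (‖g m y‖₊ : ℝ≥0∞) ^ (2:ℝ) ≤ ∫⁻ x, (‖f (x,y)‖₊ : ℝ≥0∞) ^ (2:ℝ) ∂μ1 := by
    intro m y
    have h1 : (‖g m y‖₊ : ℝ≥0∞) ≤ ∫⁻ x, (‖f (x,y)‖₊ : ℝ≥0∞) ∂μ1 := by
      refine le_trans (enorm_integral_le_lintegral_enorm _) (le_of_eq (lintegral_congr fun x => ?_))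
      rw [enorm_eq_nnnorm, nnnorm_mul, eK_nnnorm, one_mul]
    calc (‖g m y‖₊ : ℝ≥0∞) ^ (2:ℝ)
        ≤ (∫⁻ x, (‖f (x,y)‖₊ : ℝ≥0∞) ∂μ1) ^ (2:ℝ) := ENNReal.rpow_le_rpow h1 (by norm_num)
      _ ≤ ∫⁻ x, (‖f (x,y)‖₊ : ℝ≥0∞) ^ (2:ℝ) ∂μ1 :=
          lintegral_sq_le _ ((hsecm y).enorm.aemeasurable)
  have hgmem : ∀ m, MemLp (g m) 2 μ1 := by
    intro m
    refine ⟨(hgsm m).aestronglyMeasurable, ?_⟩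
    rw [eLpNorm_lt_top_iff_lintegral_rpow_enorm_lt_top (by norm_num) (by norm_num)]
    have : ∫⁻ y, (‖g m y‖₊ : ℝ≥0∞) ^ ((2:ℝ≥0∞)).toReal ∂μ1
        ≤ ∫⁻ y, ∫⁻ x, (‖f (x,y)‖₊ : ℝ≥0∞) ^ (2:ℝ) ∂μ1 ∂μ1 := by
      refine lintegral_mono fun y => ?_
      simpa using hgbd m y
    refine lt_of_le_of_lt this ?_
    rw [hswap]; exact hfin
  have hint2 : ∀ m n : ℤ, Integrable
      (fun z : ℝ × ℝ => eK (-(α+m)) z.1 * eK (-(β m + n)) z.2 * f z) P := by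
    intro m n
    refine hfint.bdd_mul (c := 1) ?_ (Filter.Eventually.of_forall fun z => ?_)
    · exact (((eK_cont _).comp continuous_fst).mul ((eK_cont _).comp continuous_snd)).aestronglyMeasurable
    · rw [norm_mul, eK_norm, eK_norm, mul_one]
  have hg0 : ∀ m, g m =ᵐ[μ1] 0 := by
    intro m
    apply key1D (g m) (hgmem m) (-(β m))
    intro k
    have h0 := hI m (-k)
    rw [integral_prod_symm _ (hint2 m (-k))] at h0
    have hre : ∀ y, ∫ x, eK (-(α+m)) x * eK (-(β m + (-k:ℤ))) y * f (x,y) ∂μ1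
        = g m y * eK (-(β m) + (k:ℤ)) y := by
      intro y
      have : ∀ x, eK (-(α+m)) x * eK (-(β m + (-k:ℤ))) y * f (x,y)
          = eK (-(β m) + (k:ℤ)) y * (eK (-(α+m)) x * f (x,y)) := by
        intro x
        have harg : -(β m + ((-k:ℤ):ℝ)) = -(β m) + ((k:ℤ):ℝ) := by push_cast; ring
        rw [harg]; ring
      simp_rw [this]
      rw [integral_const_mul, mul_comm]
    simp_rw [hre] at h0
    exact h0
  have hall : ∀ᵐ y ∂μ1, ∀ m : ℤ, g m y = 0 := by
    rw [ae_all_iff]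
    intro m
    exact hg0 m
  have hsliced : ∀ᵐ y ∂μ1, ∀ᵐ x ∂μ1, f (x, y) = 0 := by
    filter_upwards [hall, hsec] with y hy hfiny
    have hmemy : MemLp (fun x => f (x, y)) 2 μ1 := by
      refine ⟨(hsecm y).aestronglyMeasurable, ?_⟩
      rw [eLpNorm_lt_top_iff_lintegral_rpow_enorm_lt_top (by norm_num) (by norm_num)]
      simpa [enorm_eq_nnnorm] using hfiny
    apply key1D _ hmemy (-α)
    intro j
    have := hy (-j)
    rw [hg] at this
    simp only at this
    have hre2 : ∀ x, eK (-(α+((-j:ℤ):ℝ))) x * f (x,y) = f (x,y) * eK (-α + (j:ℤ)) x := by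
      intro x
      have harg : -(α + ((-j:ℤ):ℝ)) = -α + ((j:ℤ):ℝ) := by push_cast; ring
      rw [harg]; ring
    rw [← this]
    exact integral_congr_ae (Filter.Eventually.of_forall fun x => (hre2 x).symm)
  -- conclude
  have hA : MeasurableSet {z : ℝ × ℝ | f z ≠ 0} :=
    (hfsm.measurable (measurableSet_singleton 0)).compl
  have hswapA : MeasurableSet {w : ℝ × ℝ | f (w.2, w.1) ≠ 0} :=
    ((hfsm.measurable.comp measurable_swap) (measurableSet_singleton 0)).compl
  have hPzero : P {z : ℝ × ℝ | f z ≠ 0} = 0 := by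
    have h1 : P {z : ℝ × ℝ | f z ≠ 0} = P (Prod.swap ⁻¹' {z : ℝ × ℝ | f z ≠ 0}) := by
      conv_lhs => rw [hP, ← Measure.prod_swap]
      rw [Measure.map_apply measurable_swap hA]
    rw [h1]
    have : (Prod.swap ⁻¹' {z : ℝ × ℝ | f z ≠ 0}) = {w : ℝ × ℝ | f (w.2, w.1) ≠ 0} := rfl
    rw [this, hP, Measure.measure_prod_null hswapA]
    filter_upwards [hsliced] with y hy
    have : Prod.mk y ⁻¹' {w : ℝ × ℝ | f (w.2, w.1) ≠ 0} = {x : ℝ | f (x, y) ≠ 0} := rfl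
    rw [this]
    rw [ae_iff] at hy
    simpa using hy
  rw [Filter.EventuallyEq, ae_iff]
  simpa using hPzero


/-- For any `α ∈ ℝ` and any `β : ℤ → [0,1)`, the set
`Λ = {(α + m, β(m) + n) : m, n ∈ ℤ}` makes `([0,1]², Λ)` a spectral pair. -/
theorem spectralPair_unitSquare_of_beta (α : ℝ) (β : ℤ → ℝ)
    (hβ : ∀ m : ℤ, β m ∈ Set.Ico (0 : ℝ) 1) :
    IsSpectralPair unitSquare
      {p : ℝ × ℝ | ∃ m n : ℤ, p = (α + m, β m + n)} := by
  refine ⟨fun l _ => toL2_ne_zero l, ?_, ?_⟩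
  · rintro l ⟨m, n, rfl⟩ l' ⟨m', n', rfl⟩ hne
    rw [inner_exp]
    rcases eq_or_ne m m' with hm | hm
    · subst hm
      have hn : n ≠ n' := by
        intro hn; exact hne (by rw [hn])
      rw [show (-((α + (m:ℝ), β m + (n:ℝ)).2) + ((α + (m:ℝ), β m + (n':ℝ)).2))
          = ((n' - n : ℤ) : ℝ) from by push_cast; ring]
      rw [eK_int_zero _ (sub_ne_zero.2 (Ne.symm hn)), mul_zero]
    · rw [show (-((α + (m:ℝ), β m + (n:ℝ)).1) + ((α + (m':ℝ), β m' + (n':ℝ)).1))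
          = ((m' - m : ℤ) : ℝ) from by push_cast; ring]
      rw [eK_int_zero _ (sub_ne_zero.2 (Ne.symm hm)), zero_mul]
  · rw [Submodule.dense_iff_topologicalClosure_eq_top,
      Submodule.topologicalClosure_eq_top_iff, Submodule.eq_bot_iff]
    intro F hF
    have hO : ∀ m n : ℤ,
        (inner ℂ (toL2 unitSquare (expFn2 (α + m, β m + n))) F : ℂ) = 0 := by
      intro m n
      exact (Submodule.mem_orthogonal _ F).1 hF _
        (Submodule.subset_span ⟨(α + m, β m + n), ⟨m, n, rfl⟩, rfl⟩)
    have hFm : MemLp (⇑F) 2 (volume.restrict unitSquare) := Lp.memLp F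
    set f : ℝ × ℝ → ℂ := hFm.1.mk (⇑F) with hfdef
    have hfsm : StronglyMeasurable f := hFm.1.stronglyMeasurable_mk
    have hfeq : ⇑F =ᵐ[volume.restrict unitSquare] f := hFm.1.ae_eq_mk
    have hf2 : MemLp f 2
        ((volume.restrict (Ioc (0:ℝ) 1)).prod (volume.restrict (Ioc (0:ℝ) 1))) := by
      rw [← unitSquare_ae_eq]; exact hFm.ae_eq hfeq
    have hI : ∀ m n : ℤ, ∫ z, eK (-(α + (m:ℝ))) z.1 * eK (-(β m + (n:ℝ))) z.2 * f z
        ∂((volume.restrict (Ioc (0:ℝ) 1)).prod (volume.restrict (Ioc (0:ℝ) 1))) = 0 := by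
      intro m n
      have h0 := hO m n
      rw [toL2, dif_pos (expFn2_memℒp _), MeasureTheory.L2.inner_def] at h0
      rw [← unitSquare_ae_eq, ← h0]
      apply integral_congr_ae
      filter_upwards [(expFn2_memℒp (α + (m:ℝ), β m + (n:ℝ))).coeFn_toLp, hfeq] with z h1 h2
      rw [h1, RCLike.inner_apply, ← h2, expFn2_eq, map_mul, eK_conj, eK_conj, mul_comm]
    have hae := density_aux f hfsm hf2 α β hI
    rw [← unitSquare_ae_eq] at hae
    exact Lp.eq_zero_iff_ae_eq_zero.2 (hfeq.trans hae)
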